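/- The identity is the only order-isomorphism of (Δⁿ, ⊑) that fixes every maximal element and preserves Shannon entropy μ(x) = −∑ xᵢ log xᵢ. -/

import Mathlib

open Finset

/-- Δⁿ: probability distributions on {1,…,n}. -/
def IsDist {n : ℕ} (x : Fin n → ℝ) : Prop :=
  (∀ i, 0 ≤ x i) ∧ ∑ i, x i = 1

/-- The adjacent-index inequalities  xᵢ yᵢ₊₁ ≤ xᵢ₊₁ yᵢ  for all i ∈ {1,…,n-1}. -/
def AdjLE {n : ℕ} (x y : Fin n → ℝ) : Prop :=
  ∀ i : ℕ, ∀ h : i + 1 < n,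
    x ⟨i, Nat.lt_of_succ_lt h⟩ * y ⟨i + 1, h⟩ ≤ x ⟨i + 1, h⟩ * y ⟨i, Nat.lt_of_succ_lt h⟩

/-- The Bayesian order on Δⁿ: x ⊑ y iff some permutation σ monotonizes both
(x∘σ, y∘σ decreasing, i.e. in Λⁿ) and the adjacent inequalities hold. -/
def BayesLE {n : ℕ} (x y : Fin n → ℝ) : Prop :=
  ∃ σ : Equiv.Perm (Fin n),
    Antitone (x ∘ σ) ∧ Antitone (y ∘ σ) ∧ AdjLE (x ∘ σ) (y ∘ σ)

/-- Shannon entropy μ(x) = −∑ xᵢ log xᵢ (with 0·log 0 = 0, since Real.log 0 = 0). -/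
noncomputable def shannonEntropy {n : ℕ} (x : Fin n → ℝ) : ℝ :=
  -∑ i, x i * Real.log (x i)


/-! The point masses `uniformDist {i}` are fixed, and `uniformDist S` is their meet over `i ∈ S`,
so it is fixed as well. As `uniformDist S ⊑ x` exactly when the support of `x` lies in `S`, `h`
preserves supports. Now induct on the size of the support `S` of `x`. Let `i₀` be a point where
`x` is minimal on `S` and `T = S \ {i₀}`. Conditioning `x` on `T` gives a distribution of smaller
support above `x`; it is fixed by `h`, hence lies above `h x` as well, and symmetrically for
`h x`. These two comparisons force `h x` to be proportional to `x` on `T`, so `x` and `h x` differ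
only in the mass `s` at `i₀`. Along this one-parameter family the entropy is
`binEntropy s + (1 - s) * H(x | T)`, which is strictly increasing as long as `i₀` stays a
minimum, so preserving entropy pins down `s`. -/

open Real

variable {n : ℕ}

theorem exists_perm_antitone_comp {α : Type*} [LinearOrder α] (w : Fin n → α) :
    ∃ σ : Equiv.Perm (Fin n), Antitone (w ∘ σ) :=
  ⟨Tuple.sort (OrderDual.toDual ∘ w), monotone_toDual_comp_iff.1 (Tuple.monotone_sort _)⟩

section Criteria

variable {x y : Fin n → ℝ}

theorem bayesLE_of_key {α : Type*} [LinearOrder α] (w : Fin n → α)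
    (hx : ∀ i j, w i ≤ w j → x i ≤ x j) (hy : ∀ i j, w i ≤ w j → y i ≤ y j)
    (hxy : ∀ i j, w j ≤ w i → x i * y j ≤ x j * y i) : BayesLE x y := by
  obtain ⟨σ, hσ⟩ := exists_perm_antitone_comp w
  exact ⟨σ, fun u v huv => hx _ _ (hσ huv), fun u v huv => hy _ _ (hσ huv),
    fun k hk => hxy _ _ (hσ (Fin.mk_le_mk.2 k.le_succ))⟩

theorem bayesLE_of_upClosed {f : Fin n → ℝ} {S : Finset (Fin n)}
    (hS : ∀ i ∈ S, ∀ j ∉ S, f j ≤ f i)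
    (hx : ∀ i j, f i ≤ f j → (i ∈ S → j ∈ S) → x i ≤ x j)
    (hy : ∀ i j, f i ≤ f j → (i ∈ S → j ∈ S) → y i ≤ y j)
    (hxy : ∀ i j, f j ≤ f i → (j ∈ S → i ∈ S) → x i * y j ≤ x j * y i) :
    BayesLE x y := by
  -- Sorting by membership in `S` first and by `f` second; as `S` is up-closed for `f`,
  -- the key `f + 1_S` realizes this lexicographic order.
  have key : ∀ i j, f i + (if i ∈ S then 1 else 0) ≤ f j + (if j ∈ S then 1 else 0) →
      f i ≤ f j ∧ (i ∈ S → j ∈ S) := by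
    intro i j hij
    by_cases hi : i ∈ S <;> by_cases hj : j ∈ S <;> simp only [hi, hj, if_true, if_false] at hij
    · exact ⟨by linarith, fun _ => hj⟩
    · linarith [hS i hi j hj]
    · exact ⟨hS j hj i hi, fun h => absurd h hi⟩
    · exact ⟨by linarith, fun h => absurd h hi⟩
  exact bayesLE_of_key _ (fun i j h => hx i j (key i j h).1 (key i j h).2)
    (fun i j h => hy i j (key i j h).1 (key i j h).2)
    (fun i j h => hxy i j (key j i h).1 (key j i h).2)

end Criteria

theorem AdjLE.mul_le_mul {a b : Fin n → ℝ} (hab : AdjLE a b) (hb : Antitone b) {u v : Fin n}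
    (huv : u ≤ v) (hv : 0 < b v) : a u * b v ≤ a v * b u := by
  obtain ⟨v, hvn⟩ := v
  obtain ⟨k, rfl⟩ := Nat.exists_eq_add_of_le (show (u : ℕ) ≤ v from huv)
  induction k with
  | zero => exact le_of_eq (by simp)
  | succ k ih =>
    have hk : (u : ℕ) + k < n := by omega
    have hp : 0 < b ⟨u + k, hk⟩ := hv.trans_le (hb (Fin.mk_le_mk.2 (by omega)))
    have hu : 0 ≤ b u := hp.le.trans (hb (Fin.le_def.2 (by simp)))
    have h1 := ih hk (Fin.le_def.2 (by simp)) hp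
    have h2 : a ⟨u + k, hk⟩ * b ⟨u + (k + 1), hvn⟩ ≤ a ⟨u + (k + 1), hvn⟩ * b ⟨u + k, hk⟩ :=
      hab (u + k) hvn
    refine le_of_mul_le_mul_right ?_ hp
    nlinarith [mul_le_mul_of_nonneg_right h1 hv.le, mul_le_mul_of_nonneg_left h2 hu]

namespace BayesLE

variable {x y : Fin n → ℝ} {i j : Fin n}

theorem le_of_lt (h : BayesLE x y) (hij : y j < y i) : x j ≤ x i := by
  obtain ⟨σ, hx, hy, -⟩ := h
  have hlt : σ.symm i < σ.symm j := by
    by_contra! hle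
    have := hy hle
    simp only [Function.comp_apply, Equiv.apply_symm_apply] at this
    linarith
  simpa using hx hlt.le

theorem mul_le_mul (h : BayesLE x y) (hj : 0 < y j) (hij : y j ≤ y i) :
    x i * y j ≤ x j * y i := by
  obtain ⟨σ, hx, hy, hadj⟩ := h
  rcases le_total (σ.symm i) (σ.symm j) with hle | hle
  · simpa using hadj.mul_le_mul hy hle (by simpa using hj)
  · have hyij : y i = y j := le_antisymm (by simpa using hy hle) hij
    rw [hyij]
    exact mul_le_mul_of_nonneg_right (by simpa using hx hle) hj.le

theorem le_of_le (h : BayesLE x y) (hj : 0 < y j) (hij : y j ≤ y i) : x j ≤ x i := by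
  rcases hij.lt_or_eq with hlt | heq
  · exact h.le_of_lt hlt
  · have := h.mul_le_mul (i := j) (j := i) (heq ▸ hj) heq.ge
    rw [heq] at this
    exact le_of_mul_le_mul_right this (heq ▸ hj)

end BayesLE

noncomputable def posSupport (x : Fin n → ℝ) : Finset (Fin n) := univ.filter (0 < x ·)

section Support

variable {x : Fin n → ℝ} {S : Finset (Fin n)} {i j : Fin n}

@[simp] theorem mem_posSupport : i ∈ posSupport x ↔ 0 < x i := by
  simp [posSupport]

theorem posSupport_subset_iff (hx : ∀ i, 0 ≤ x i) : posSupport x ⊆ S ↔ ∀ j ∉ S, x j = 0 := by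
  refine ⟨fun h j hj => le_antisymm (not_lt.1 fun hpos => hj (h (mem_posSupport.2 hpos))) (hx j),
    fun h j hj => ?_⟩
  by_contra hjS
  exact (mem_posSupport.1 hj).ne' (h j hjS)

theorem IsDist.posSupport_nonempty (hx : IsDist x) : (posSupport x).Nonempty := by
  rw [nonempty_iff_ne_empty]
  intro h
  have := (posSupport_subset_iff hx.1).1 (h ▸ Subset.rfl : posSupport x ⊆ ∅)
  simpa [Finset.sum_eq_zero fun j _ => this j (notMem_empty j)] using hx.2

theorem IsDist.sum_erase (hx : IsDist x) (hxS : posSupport x ⊆ S) (hi : i ∈ S) :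
    ∑ j ∈ S.erase i, x j = 1 - x i := by
  rw [← hx.2, ← sum_subset (subset_univ S) fun j _ hj => (posSupport_subset_iff hx.1).1 hxS j hj,
    ← add_sum_erase _ _ hi]
  ring

end Support

noncomputable def uniformDist (S : Finset (Fin n)) : Fin n → ℝ :=
  fun i => if i ∈ S then (#S : ℝ)⁻¹ else 0

section Uniform

variable {S : Finset (Fin n)} {i j : Fin n}

theorem uniformDist_nonneg (S : Finset (Fin n)) (i : Fin n) : 0 ≤ uniformDist S i := by
  unfold uniformDist
  split_ifs <;> positivity

theorem uniformDist_isDist (hS : S.Nonempty) : IsDist (uniformDist S) := by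
  refine ⟨uniformDist_nonneg S, ?_⟩
  simp [uniformDist, sum_ite_mem, hS.card_ne_zero]

theorem uniformDist_pos (hi : i ∈ S) : 0 < uniformDist S i := by
  simpa [uniformDist, hi] using card_pos.2 ⟨i, hi⟩

theorem uniformDist_le_of_imp (h : i ∈ S → j ∈ S) : uniformDist S i ≤ uniformDist S j := by
  by_cases hi : i ∈ S
  · simp [uniformDist, hi, h hi]
  · simpa [uniformDist, hi] using uniformDist_nonneg S j

theorem uniformDist_singleton_eq_zero_or_one (i j : Fin n) :
    uniformDist {i} j = 0 ∨ uniformDist {i} j = 1 := by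
  by_cases h : j = i <;> simp [uniformDist, h]

theorem bayesLE_uniformDist_iff {z : Fin n → ℝ} (hz : ∀ i, 0 ≤ z i) :
    BayesLE z (uniformDist S) ↔ ∀ i ∈ S, ∀ j, z j ≤ z i := by
  refine ⟨fun h i hi j => ?_, fun hmax => ?_⟩
  · by_cases hj : j ∈ S
    · exact h.le_of_le (uniformDist_pos hj) (uniformDist_le_of_imp fun _ => hi)
    · exact h.le_of_lt (by simpa [uniformDist, hj] using uniformDist_pos hi)
  refine bayesLE_of_upClosed (fun i hi j _ => hmax i hi j) (fun i j h _ => h)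
    (fun i j _ h => uniformDist_le_of_imp h) fun i j _ hji => ?_
  by_cases hj : j ∈ S
  · rw [le_antisymm (hmax j hj i) (hmax i (hji hj) j)]
    simp [uniformDist, hj, hji hj]
  · simpa [uniformDist, hj] using mul_nonneg (hz j) (uniformDist_nonneg S i)

theorem uniformDist_bayesLE_iff {x : Fin n → ℝ} (hx : ∀ i, 0 ≤ x i) (hS : S.Nonempty) :
    BayesLE (uniformDist S) x ↔ posSupport x ⊆ S := by
  rw [posSupport_subset_iff hx]
  refine ⟨fun h j hj => ?_, fun hzero => ?_⟩
  · obtain ⟨i, hi⟩ := hS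
    have hpos := uniformDist_pos hi
    have hzero : uniformDist S j = 0 := by simp [uniformDist, hj]
    by_contra hne
    have hxj : 0 < x j := (hx j).lt_of_ne' hne
    rcases le_or_gt (x j) (x i) with hle | hlt
    · have := h.mul_le_mul hxj hle
      rw [hzero, zero_mul] at this
      exact (mul_pos hpos hxj).not_ge this
    · exact (h.le_of_lt hlt).not_gt (hzero ▸ hpos)
  refine bayesLE_of_upClosed (f := x) (fun i _ j hj => hzero j hj ▸ hx i)
    (fun i j _ h => uniformDist_le_of_imp h) (fun i j h _ => h) fun i j hji hS => ?_
  by_cases hj : j ∈ S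
  · simpa [uniformDist, hj, hS hj] using mul_le_mul_of_nonneg_left hji (uniformDist_nonneg S i)
  · simpa [hzero j hj] using mul_nonneg (uniformDist_nonneg S j) (hx i)

theorem eq_uniformDist {x : Fin n → ℝ} (hx : IsDist x) (hmax : ∀ i ∈ S, ∀ j, x j ≤ x i)
    (hxS : posSupport x ⊆ S) : x = uniformDist S := by
  funext i
  by_cases hi : i ∈ S
  · have hconst : ∑ j ∈ S, x j = #S * x i := by
      rw [sum_congr rfl fun j hj => le_antisymm (hmax i hi j) (hmax j hj i)]
      simp
    have hsum : ∑ j ∈ S, x j = 1 := by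
      rw [← hx.2]
      exact sum_subset (subset_univ S) fun j _ hj => (posSupport_subset_iff hx.1).1 hxS j hj
    rw [uniformDist, if_pos hi]
    exact eq_inv_of_mul_eq_one_right (hconst ▸ hsum)
  · rw [uniformDist, if_neg hi, (posSupport_subset_iff hx.1).1 hxS i hi]

end Uniform

noncomputable def condOn (x : Fin n → ℝ) (T : Finset (Fin n)) : Fin n → ℝ :=
  fun i => if i ∈ T then x i / ∑ j ∈ T, x j else 0

section Conditioning

variable {x z : Fin n → ℝ} {T : Finset (Fin n)} {i j : Fin n}

theorem condOn_nonneg (hx : ∀ i, 0 ≤ x i) (i : Fin n) : 0 ≤ condOn x T i := by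
  unfold condOn
  split_ifs
  exacts [div_nonneg (hx i) (sum_nonneg fun j _ => hx j), le_rfl]

theorem condOn_pos (hT : ∀ i ∈ T, 0 < x i) (hi : i ∈ T) : 0 < condOn x T i := by
  simpa [condOn, hi] using div_pos (hT i hi) (sum_pos hT ⟨i, hi⟩)

theorem condOn_isDist (hx : ∀ i, 0 ≤ x i) (hT : 0 < ∑ j ∈ T, x j) : IsDist (condOn x T) :=
  ⟨condOn_nonneg hx, by simp [condOn, sum_ite_mem, ← sum_div, hT.ne']⟩

theorem posSupport_condOn (hT : ∀ i ∈ T, 0 < x i) : posSupport (condOn x T) = T := by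
  ext i
  by_cases hi : i ∈ T
  · simpa [hi] using condOn_pos hT hi
  · simp [condOn, hi]

theorem bayesLE_condOn (hx : ∀ i, 0 ≤ x i) (hT : ∀ i ∈ T, ∀ j ∉ T, x j ≤ x i) :
    BayesLE x (condOn x T) := by
  refine bayesLE_of_upClosed hT (fun i j h _ => h) (fun i j hij hT => ?_) fun i j _ hji => ?_
  · by_cases hi : i ∈ T
    · simpa [condOn, hi, hT hi] using
        div_le_div_of_nonneg_right hij (sum_nonneg fun k _ => hx k)
    · simpa [condOn, hi] using condOn_nonneg hx j
  · by_cases hj : j ∈ T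
    · simp only [condOn, hj, hji hj, if_true]
      exact le_of_eq (by ring)
    · simpa [condOn, hj] using mul_nonneg (hx j) (condOn_nonneg hx i)

theorem BayesLE.le_of_condOn (h : BayesLE z (condOn x T)) (hT : ∀ i ∈ T, 0 < x i)
    (hi : i ∈ T) (hj : j ∈ T) (hij : x j ≤ x i) : z j ≤ z i :=
  h.le_of_le (condOn_pos hT hj) <| by
    simpa [condOn, hi, hj] using div_le_div_of_nonneg_right hij (sum_pos hT ⟨i, hi⟩).le

theorem BayesLE.mul_le_mul_of_condOn (h : BayesLE z (condOn x T)) (hT : ∀ i ∈ T, 0 < x i)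
    (hi : i ∈ T) (hj : j ∈ T) (hij : x j ≤ x i) : z i * x j ≤ z j * x i := by
  have hD := sum_pos hT ⟨i, hi⟩
  have := h.mul_le_mul (i := i) (condOn_pos hT hj) <| by
    simpa [condOn, hi, hj] using div_le_div_of_nonneg_right hij hD.le
  simp only [condOn, hi, hj, if_true, ← mul_div_assoc] at this
  exact (div_le_div_iff_of_pos_right hD).1 this

theorem BayesLE.le_of_condOn_of_notMem (h : BayesLE z (condOn x T)) (hT : ∀ i ∈ T, 0 < x i)
    (hi : i ∉ T) (hj : j ∈ T) : z i ≤ z j :=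
  h.le_of_lt (by simpa [condOn, hi] using condOn_pos hT hj)

theorem mul_eq_mul_of_bayesLE_condOn {x' : Fin n → ℝ} (hx : ∀ i ∈ T, 0 < x i)
    (hx' : ∀ i ∈ T, 0 < x' i) (h : BayesLE x' (condOn x T)) (h' : BayesLE x (condOn x' T))
    (hi : i ∈ T) (hj : j ∈ T) : x' i * x j = x' j * x i := by
  wlog hij : x j ≤ x i generalizing i j
  · exact (this hj hi (le_of_not_ge hij)).symm
  have h₁ := h.mul_le_mul_of_condOn hx hi hj hij
  have h₂ := h'.mul_le_mul_of_condOn hx' hi hj (h.le_of_condOn hx hi hj hij)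
  linarith

end Conditioning

section Entropy

theorem shannonEntropy_eq_sum_negMulLog (x : Fin n → ℝ) :
    shannonEntropy x = ∑ i, negMulLog (x i) := by
  simp [shannonEntropy, negMulLog, sum_neg_distrib]

theorem sum_negMulLog_mul {ι : Type*} {T : Finset ι} {c : ι → ℝ} (hc : ∑ i ∈ T, c i = 1)
    (D : ℝ) : ∑ i ∈ T, negMulLog (D * c i) = negMulLog D + D * ∑ i ∈ T, negMulLog (c i) := by
  simp only [negMulLog_mul, sum_add_distrib, ← sum_mul, hc, one_mul, mul_sum]

theorem sum_negMulLog_le_neg_log {ι : Type*} {T : Finset ι} {c : ι → ℝ} {m : ℝ} (hm : 0 < m)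
    (hc : ∑ i ∈ T, c i = 1) (hmin : ∀ i ∈ T, m ≤ c i) :
    ∑ i ∈ T, negMulLog (c i) ≤ -log m :=
  calc ∑ i ∈ T, negMulLog (c i) ≤ ∑ i ∈ T, c i * -log m := sum_le_sum fun i hi => by
          have := log_le_log hm (hmin i hi)
          rw [negMulLog, neg_mul, ← mul_neg]
          nlinarith [hm.trans_le (hmin i hi)]
    _ = -log m := by rw [← sum_mul, hc, one_mul]

theorem shannonEntropy_eq_binEntropy_add {x c : Fin n → ℝ} {S : Finset (Fin n)} {i₀ : Fin n}
    (hx : ∀ i, 0 ≤ x i) (hxS : posSupport x ⊆ S) (hi₀ : i₀ ∈ S)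
    (hc : ∑ i ∈ S.erase i₀, c i = 1) (hxc : ∀ i ∈ S.erase i₀, x i = (1 - x i₀) * c i) :
    shannonEntropy x =
      binEntropy (x i₀) + (1 - x i₀) * ∑ i ∈ S.erase i₀, negMulLog (c i) := by
  rw [shannonEntropy_eq_sum_negMulLog, ← sum_subset (subset_univ S) fun j _ hj => by
      rw [(posSupport_subset_iff hx).1 hxS j hj, negMulLog_zero],
    ← add_sum_erase _ _ hi₀, sum_congr rfl fun i hi => by rw [hxc i hi], sum_negMulLog_mul hc,
    binEntropy_eq_negMulLog_add_negMulLog_one_sub]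
  ring

theorem strictMonoOn_binEntropy_add_mul {a c : ℝ} (hc : 0 < c) (ha : a ≤ -log c) :
    StrictMonoOn (fun s => binEntropy s + (1 - s) * a) (Set.Ioc 0 (c / (1 + c))) := by
  refine strictMonoOn_of_deriv_pos (convex_Ioc _ _) (by fun_prop) fun s hs => ?_
  rw [interior_Ioc] at hs
  obtain ⟨hs0, hs1⟩ := hs
  have hsc : s < (1 - s) * c := by
    rw [lt_div_iff₀ (by positivity)] at hs1
    linarith
  have h1s : 0 < 1 - s := by nlinarith
  have hderiv : HasDerivAt (fun s => binEntropy s + (1 - s) * a) (log (1 - s) - log s - a) s :=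
    ((hasDerivAt_binEntropy hs0.ne' (by linarith)).add
      (((hasDerivAt_id s).const_sub 1).mul_const a)).congr_deriv (by ring)
  rw [hderiv.deriv]
  have := log_lt_log hs0 hsc
  rw [log_mul h1s.ne' hc.ne'] at this
  linarith

theorem eq_of_binEntropy_add_mul_eq {ι : Type*} {T : Finset ι} {c : ι → ℝ} (hT : T.Nonempty)
    (hc₀ : ∀ i ∈ T, 0 < c i) (hc : ∑ i ∈ T, c i = 1) {s t : ℝ}
    (hs : 0 < s) (hsc : ∀ i ∈ T, s ≤ (1 - s) * c i) (ht : 0 < t) (htc : ∀ i ∈ T, t ≤ (1 - t) * c i)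
    (h : binEntropy s + (1 - s) * ∑ i ∈ T, negMulLog (c i) =
      binEntropy t + (1 - t) * ∑ i ∈ T, negMulLog (c i)) : s = t := by
  obtain ⟨j, hj, hmin⟩ := T.exists_min_image c hT
  have hcj := hc₀ j hj
  have mem : ∀ r, 0 < r → r ≤ (1 - r) * c j → r ∈ Set.Ioc 0 (c j / (1 + c j)) := fun r hr hrc =>
    ⟨hr, by rw [le_div_iff₀ (by positivity)]; linarith⟩
  exact (strictMonoOn_binEntropy_add_mul hcj (sum_negMulLog_le_neg_log hcj hc hmin)).injOn
    (mem s hs (hsc j hj)) (mem t ht (htc j hj)) h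

end Entropy

section Determination

variable {x x' : Fin n → ℝ} {S : Finset (Fin n)} {i₀ : Fin n}

theorem IsDist.eq_uniformDist_singleton (hx : IsDist x) (hxS : posSupport x ⊆ {i₀}) :
    x = uniformDist {i₀} := by
  refine eq_uniformDist hx (fun i hi j => ?_) hxS
  rw [mem_singleton.1 hi]
  by_cases hj : j = i₀
  · rw [hj]
  · rw [(posSupport_subset_iff hx.1).1 hxS j (by simpa using hj)]
    exact hx.1 i₀

theorem le_of_mem_erase_of_notMem (hx : ∀ i, 0 ≤ x i) (hxS : posSupport x ⊆ S)
    (hmin : ∀ j ∈ S, x i₀ ≤ x j) {i j : Fin n} (hi : i ∈ S.erase i₀) (hj : j ∉ S.erase i₀) :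
    x j ≤ x i := by
  by_cases hj₀ : j = i₀
  · exact hj₀ ▸ hmin i (mem_of_mem_erase hi)
  · rw [(posSupport_subset_iff hx).1 hxS j fun hjS => hj (mem_erase.2 ⟨hj₀, hjS⟩)]
    exact hx i

theorem eq_of_bayesLE_condOn_erase (hx : IsDist x) (hx' : IsDist x')
    (hsupp : posSupport x' = posSupport x) (hi₀ : i₀ ∈ posSupport x)
    (hmin : ∀ j ∈ posSupport x, x i₀ ≤ x j) (hmin' : ∀ j ∈ posSupport x, x' i₀ ≤ x' j)
    (hT : ((posSupport x).erase i₀).Nonempty)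
    (h : BayesLE x' (condOn x ((posSupport x).erase i₀)))
    (h' : BayesLE x (condOn x' ((posSupport x).erase i₀)))
    (hent : shannonEntropy x' = shannonEntropy x) : x' = x := by
  set T := (posSupport x).erase i₀
  have hxS' : posSupport x' ⊆ posSupport x := hsupp.subset
  have hTx : ∀ i ∈ T, 0 < x i := fun i hi => mem_posSupport.1 (mem_of_mem_erase hi)
  have hTx' : ∀ i ∈ T, 0 < x' i := fun i hi => mem_posSupport.1 (hsupp ▸ mem_of_mem_erase hi)
  have hsum : ∑ j ∈ T, x j = 1 - x i₀ := hx.sum_erase Subset.rfl hi₀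
  have hsum' : ∑ j ∈ T, x' j = 1 - x' i₀ := hx'.sum_erase hxS' hi₀
  have hD : 0 < 1 - x i₀ := hsum ▸ sum_pos hTx hT
  set c : Fin n → ℝ := fun i => x i / (1 - x i₀)
  have hc : ∑ i ∈ T, c i = 1 := by rw [← sum_div, hsum, div_self hD.ne']
  have hxc : ∀ i ∈ T, x i = (1 - x i₀) * c i := fun i _ => (mul_div_cancel₀ _ hD.ne').symm
  have hx'c : ∀ i ∈ T, x' i = (1 - x' i₀) * c i := fun i hi => by
    have : x' i * (1 - x i₀) = x i * (1 - x' i₀) := by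
      rw [← hsum, ← hsum', mul_sum, mul_sum]
      exact sum_congr rfl fun j hj => by
        linarith [mul_eq_mul_of_bayesLE_condOn hTx hTx' h h' hi hj]
    show x' i = (1 - x' i₀) * (x i / (1 - x i₀))
    rw [mul_div_assoc', eq_div_iff hD.ne', this, mul_comm]
  have hα : x' i₀ = x i₀ := by
    refine eq_of_binEntropy_add_mul_eq hT (fun i hi => div_pos (hTx i hi) hD) hc
      (mem_posSupport.1 (hsupp ▸ hi₀)) (fun i hi => ?_) (mem_posSupport.1 hi₀) (fun i hi => ?_) ?_
    · rw [← hx'c i hi]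
      exact hmin' i (mem_of_mem_erase hi)
    · rw [← hxc i hi]
      exact hmin i (mem_of_mem_erase hi)
    · rw [← shannonEntropy_eq_binEntropy_add hx'.1 hxS' hi₀ hc hx'c,
        ← shannonEntropy_eq_binEntropy_add hx.1 Subset.rfl hi₀ hc hxc, hent]
  funext i
  by_cases hi : i ∈ T
  · rw [hx'c i hi, hxc i hi, hα]
  by_cases hi₀' : i = i₀
  · rw [hi₀', hα]
  have hiS : i ∉ posSupport x := fun hiS => hi (mem_erase.2 ⟨hi₀', hiS⟩)
  rw [(posSupport_subset_iff hx'.1).1 hxS' i hiS, (posSupport_subset_iff hx.1).1 Subset.rfl i hiS]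

theorem eq_of_forall_bayesLE_iff (hx : IsDist x) (hx' : IsDist x')
    (hsupp : posSupport x' = posSupport x) (hent : shannonEntropy x' = shannonEntropy x)
    (hbelow : ∀ y, IsDist y → #(posSupport y) < #(posSupport x) →
      (BayesLE x' y ↔ BayesLE x y)) :
    x' = x := by
  obtain ⟨i₀, hi₀, hmin⟩ := (posSupport x).exists_min_image x hx.posSupport_nonempty
  set T := (posSupport x).erase i₀
  rcases T.eq_empty_or_nonempty with hT | hT
  · have hS : posSupport x ⊆ {i₀} :=
      (((erase_eq_empty_iff _ _).1 hT).resolve_left hx.posSupport_nonempty.ne_empty).subset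
    rw [hx'.eq_uniformDist_singleton (hsupp ▸ hS), hx.eq_uniformDist_singleton hS]
  have hTx : ∀ i ∈ T, 0 < x i := fun i hi => mem_posSupport.1 (mem_of_mem_erase hi)
  have hTx' : ∀ i ∈ T, 0 < x' i := fun i hi => mem_posSupport.1 (hsupp ▸ mem_of_mem_erase hi)
  have hbelowT : ∀ z, IsDist z → (∀ i ∈ T, 0 < z i) →
      (BayesLE x' (condOn z T) ↔ BayesLE x (condOn z T)) :=
    fun z hz hTz => hbelow _ (condOn_isDist hz.1 (sum_pos hTz hT))
      (by rw [posSupport_condOn hTz]; exact card_erase_lt_of_mem hi₀)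
  have h : BayesLE x' (condOn x T) :=
    (hbelowT x hx hTx).2 (bayesLE_condOn hx.1 fun i hi j hj =>
      le_of_mem_erase_of_notMem hx.1 Subset.rfl hmin hi hj)
  have hmin' : ∀ j ∈ posSupport x, x' i₀ ≤ x' j := fun j hj => by
    by_cases hj₀ : j = i₀
    · rw [hj₀]
    · exact h.le_of_condOn_of_notMem hTx (notMem_erase i₀ _) (mem_erase.2 ⟨hj₀, hj⟩)
  have h' : BayesLE x (condOn x' T) :=
    (hbelowT x' hx' hTx').1 (bayesLE_condOn hx'.1 fun i hi j hj =>
      le_of_mem_erase_of_notMem hx'.1 hsupp.subset hmin' hi hj)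
  exact eq_of_bayesLE_condOn_erase hx hx' hsupp hi₀ hmin hmin' hT h h' hent

end Determination

section Automorphism

variable {h : (Fin n → ℝ) → (Fin n → ℝ)}

theorem apply_uniformDist_eq (hmaps : ∀ x, IsDist x → IsDist (h x))
    (hsurj : ∀ y, IsDist y → ∃ x, IsDist x ∧ h x = y)
    (hiso : ∀ x y, IsDist x → IsDist y → (BayesLE x y ↔ BayesLE (h x) (h y)))
    (hmax : ∀ e, IsDist e → (∀ i, e i = 0 ∨ e i = 1) → h e = e)
    {S : Finset (Fin n)} (hS : S.Nonempty) : h (uniformDist S) = uniformDist S := by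
  set U := uniformDist S
  have hU : IsDist U := uniformDist_isDist hS
  have hδ : ∀ i : Fin n, IsDist (uniformDist {i}) := fun i =>
    uniformDist_isDist (singleton_nonempty i)
  have hfix : ∀ i, h (uniformDist {i}) = uniformDist {i} := fun i =>
    hmax _ (hδ i) (uniformDist_singleton_eq_zero_or_one i)
  have hmeet : ∀ z, IsDist z → (BayesLE z U ↔ ∀ i ∈ S, BayesLE z (uniformDist {i})) :=
    fun z hz => (bayesLE_uniformDist_iff hz.1).trans <| by
      simp only [bayesLE_uniformDist_iff hz.1, mem_singleton, forall_eq]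
  have hUδ : ∀ i ∈ S, BayesLE U (uniformDist {i}) := (hmeet U hU).1 <|
    (bayesLE_uniformDist_iff (uniformDist_nonneg S)).2 fun _ hi _ =>
      uniformDist_le_of_imp fun _ => hi
  have hle : BayesLE (h U) U := (hmeet _ (hmaps U hU)).2 fun i hi => by
    rw [← hfix i]
    exact (hiso _ _ hU (hδ i)).1 (hUδ i hi)
  obtain ⟨w, hw, hwU⟩ := hsurj U hU
  have hge : BayesLE U (h U) := by
    have hwle : BayesLE w U := (hmeet w hw).2 fun i hi => by
      rw [hiso _ _ hw (hδ i), hwU, hfix]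
      exact hUδ i hi
    simpa [hwU] using (hiso _ _ hw hU).1 hwle
  exact eq_uniformDist (hmaps U hU) ((bayesLE_uniformDist_iff (hmaps U hU).1).1 hle)
    ((uniformDist_bayesLE_iff (hmaps U hU).1 hS).1 hge)

theorem posSupport_apply_eq (hmaps : ∀ x, IsDist x → IsDist (h x))
    (hiso : ∀ x y, IsDist x → IsDist y → (BayesLE x y ↔ BayesLE (h x) (h y)))
    (hU : ∀ S : Finset (Fin n), S.Nonempty → h (uniformDist S) = uniformDist S)
    {x : Fin n → ℝ} (hx : IsDist x) : posSupport (h x) = posSupport x := by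
  have key : ∀ S, S.Nonempty → (posSupport (h x) ⊆ S ↔ posSupport x ⊆ S) := fun S hS => by
    rw [← uniformDist_bayesLE_iff (hmaps x hx).1 hS, ← uniformDist_bayesLE_iff hx.1 hS,
      hiso _ _ (uniformDist_isDist hS) hx, hU S hS]
  exact Subset.antisymm ((key _ hx.posSupport_nonempty).2 Subset.rfl)
    ((key _ (hmaps x hx).posSupport_nonempty).1 Subset.rfl)

end Automorphism

theorem stmt17_general {n : ℕ} (h : (Fin n → ℝ) → (Fin n → ℝ))
    (hmaps : ∀ x, IsDist x → IsDist (h x))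
    (hsurj : ∀ y, IsDist y → ∃ x, IsDist x ∧ h x = y)
    (hiso : ∀ x y, IsDist x → IsDist y → (BayesLE x y ↔ BayesLE (h x) (h y)))
    (hmax : ∀ e, IsDist e → (∀ i, e i = 0 ∨ e i = 1) → h e = e)
    (hent : ∀ x, IsDist x → shannonEntropy (h x) = shannonEntropy x) :
    ∀ x, IsDist x → h x = x := by
  have hU := fun S (hS : Finset.Nonempty S) => apply_uniformDist_eq hmaps hsurj hiso hmax hS
  suffices ∀ K x, IsDist x → #(posSupport x) = K → h x = x from fun x hx => this _ x hx rfl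
  intro K
  induction K using Nat.strong_induction_on with
  | _ K ih =>
    intro x hx hK
    refine eq_of_forall_bayesLE_iff hx (hmaps x hx) (posSupport_apply_eq hmaps hiso hU hx)
      (hent x hx) fun y hy hyK => ?_
    rw [hiso x y hx hy, ih _ (hK ▸ hyK) y hy rfl]

/-- The identity is the only order-isomorphism of (Δⁿ, ⊑) which fixes every
maximal element and preserves Shannon entropy. -/
theorem stmt17 {n : ℕ} (hn : 2 ≤ n) (h : (Fin n → ℝ) → (Fin n → ℝ))
    (hmaps : ∀ x, IsDist x → IsDist (h x))
    (hsurj : ∀ y, IsDist y → ∃ x, IsDist x ∧ h x = y)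
    (hinj : ∀ x y, IsDist x → IsDist y → h x = h y → x = y)
    (hiso : ∀ x y, IsDist x → IsDist y → (BayesLE x y ↔ BayesLE (h x) (h y)))
    (hmax : ∀ e, IsDist e → (∀ i, e i = 0 ∨ e i = 1) → h e = e)
    (hent : ∀ x, IsDist x → shannonEntropy (h x) = shannonEntropy x) :
    ∀ x, IsDist x → h x = x :=
  stmt17_general h hmaps hsurj hiso hmax hent
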